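/- arXiv:2508.05252 — 2 statements merged into one kernel-verified Lean document; each statement's English description precedes it below -/
import Mathlib

section
/- Smooth pasting is necessary for supersolutions: let F(z, r, p, X) = δ r - (θ/2) X + θ z p - f(z) with δ, θ > 0 and f continuous. Let u : ℝ → ℝ be continuous, equal to a C¹ function u_L on (z̄ - ε, z̄] and to a C¹ function u_R on [z̄, z̄ + ε). If u is a viscosity supersolution of F = 0 at z̄ (i.e., F(z̄, u(z̄), p, X) ≥ 0 for all (p, X) in the second-order subjet of u at z̄), then u_L'(z̄) ≥ u_R'(z̄). In particular, if additionally u_L'(z̄) ≤ u_R'(z̄) (e.g., by the one-sided comparison with an obstacle), then u is differentiable at z̄. -/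
open Asymptotics Filter

/-- `(p, X)` belongs to the second-order subjet `J^{2,-} u (z̄)`:
`u z ≥ u z̄ + p (z - z̄) + (X/2) (z - z̄)² + o((z - z̄)²)` as `z → z̄`. -/
def InSubjet (u : ℝ → ℝ) (zbar p X : ℝ) : Prop :=
  (fun z => min (u z - (u zbar + p * (z - zbar) + X / 2 * (z - zbar) ^ 2)) 0)
    =o[nhds zbar] fun z => (z - zbar) ^ 2

/-- smooth pasting is necessary for supersolutions: let
`F(z, r, p, X) = δ r - (θ/2) X + θ z p - f(z)` with `δ, θ > 0` and `f` continuous.  Let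
`u` be continuous, equal to a `C¹` function `u_L` on `(z̄ - ε, z̄]` and to a `C¹` function
`u_R` on `[z̄, z̄ + ε)`.  If `u` is a viscosity supersolution of `F = 0` at `z̄`
(`F(z̄, u z̄, p, X) ≥ 0` for all `(p, X)` in the second-order subjet of `u` at `z̄`), then
`u_L'(z̄) ≥ u_R'(z̄)`; if additionally `u_L'(z̄) ≤ u_R'(z̄)`, then `u` is differentiable
at `z̄`. -/
theorem smooth_pasting_necessary
    (θ δ : ℝ) (hθ : 0 < θ) (hδ : 0 < δ) (f : ℝ → ℝ) (hf : Continuous f)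
    (u uL uR : ℝ → ℝ) (zbar ε : ℝ) (hε : 0 < ε)
    (hu : Continuous u) (hL : ContDiff ℝ 1 uL) (hR : ContDiff ℝ 1 uR)
    (heqL : Set.EqOn u uL (Set.Ioc (zbar - ε) zbar))
    (heqR : Set.EqOn u uR (Set.Ico zbar (zbar + ε)))
    (hsuper : ∀ p X : ℝ, InSubjet u zbar p X →
      0 ≤ δ * u zbar - θ / 2 * X + θ * zbar * p - f zbar) :
    deriv uR zbar ≤ deriv uL zbar ∧
      (deriv uL zbar ≤ deriv uR zbar → DifferentiableAt ℝ u zbar) := by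
  set a := deriv uL zbar with ha
  set b := deriv uR zbar with hb
  have hzL : zbar ∈ Set.Ioc (zbar - ε) zbar := ⟨by linarith, le_rfl⟩
  have hzR : zbar ∈ Set.Ico zbar (zbar + ε) := ⟨le_rfl, by linarith⟩
  have huL : u zbar = uL zbar := heqL hzL
  have huR : u zbar = uR zbar := heqR hzR
  have hLd : HasDerivAt uL a zbar :=
    ((hL.differentiable one_ne_zero) zbar).hasDerivAt
  have hRd : HasDerivAt uR b zbar :=
    ((hR.differentiable one_ne_zero) zbar).hasDerivAt
  have hLo : (fun z => uL z - uL zbar - (z - zbar) * a) =o[nhds zbar] fun z => z - zbar :=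
    hasDerivAt_iff_isLittleO.mp hLd
  have hRo : (fun z => uR z - uR zbar - (z - zbar) * b) =o[nhds zbar] fun z => z - zbar :=
    hasDerivAt_iff_isLittleO.mp hRd
  have hIoo : Set.Ioo (zbar - ε) (zbar + ε) ∈ nhds zbar :=
    Ioo_mem_nhds (by linarith) (by linarith)
  -- main claim: if a < b, then every p ∈ (a,b) with every X is in the subjet
  have key : b ≤ a := by
    by_contra hab
    push_neg at hab
    set p := (a + b) / 2 with hp
    have hc1 : 0 < p - a := by simp [hp]; linarith
    have hc2 : 0 < b - p := by simp [hp]; linarith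
    set m := min (p - a) (b - p) with hm
    have hm0 : 0 < m := lt_min hc1 hc2
    have hsub : ∀ X : ℝ, InSubjet u zbar p X := by
      intro X
      have hL2 := (isLittleO_iff.mp hLo) (show (0:ℝ) < (p - a) / 2 by linarith)
      have hR2 := (isLittleO_iff.mp hRo) (show (0:ℝ) < (b - p) / 2 by linarith)
      have hq : ∀ᶠ z in nhds zbar, |X / 2| * |z - zbar| ≤ m / 2 := by
        have : Tendsto (fun z => |X / 2| * |z - zbar|) (nhds zbar) (nhds (|X / 2| * |zbar - zbar|)) := by
          apply Tendsto.mul tendsto_const_nhds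
          exact ((continuous_id.sub continuous_const).abs).tendsto zbar
        simp only [sub_self, abs_zero, mul_zero] at this
        exact this.eventually_le_const (by linarith)
      have hev : ∀ᶠ z in nhds zbar,
          0 ≤ u z - (u zbar + p * (z - zbar) + X / 2 * (z - zbar) ^ 2) := by
        filter_upwards [hL2, hR2, hq, hIoo] with z e1 e2 e3 hz
        simp only [Real.norm_eq_abs] at e1 e2
        have h1 : uL z - uL zbar - (z - zbar) * a ≥ -((p - a) / 2 * |z - zbar|) :=
          le_trans (neg_le_neg e1) (neg_abs_le _) |>.trans_eq rfl
        have h2 : uR z - uR zbar - (z - zbar) * b ≥ -((b - p) / 2 * |z - zbar|) :=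
          le_trans (neg_le_neg e2) (neg_abs_le _)
        have hq2 : X / 2 * (z - zbar) ^ 2 ≤ m / 2 * |z - zbar| := by
          have : |X / 2 * (z - zbar) ^ 2| = (|X / 2| * |z - zbar|) * |z - zbar| := by
            rw [abs_mul, abs_pow]; ring
          calc X / 2 * (z - zbar) ^ 2 ≤ |X / 2 * (z - zbar) ^ 2| := le_abs_self _
            _ = (|X / 2| * |z - zbar|) * |z - zbar| := this
            _ ≤ m / 2 * |z - zbar| := by
                apply mul_le_mul_of_nonneg_right e3 (abs_nonneg _)
        rcases le_or_gt z zbar with hle | hlt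
        · have hz' : z ∈ Set.Ioc (zbar - ε) zbar := ⟨hz.1, hle⟩
          have huz : u z = uL z := heqL hz'
          have habs : |z - zbar| = zbar - z := by
            rw [abs_of_nonpos (by linarith)]; ring
          have hmle : m ≤ p - a := min_le_left _ _
          rw [habs] at h1 hq2
          have hzz : (0:ℝ) ≤ zbar - z := by linarith
          have hmm : m / 2 * (zbar - z) ≤ (p - a) / 2 * (zbar - z) := by nlinarith
          rw [huz, huL]
          linarith
        · have hz' : z ∈ Set.Ico zbar (zbar + ε) := ⟨le_of_lt hlt, hz.2⟩
          have huz : u z = uR z := heqR hz'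
          have habs : |z - zbar| = z - zbar := by
            rw [abs_of_nonneg (by linarith)]
          have hmle : m ≤ b - p := min_le_right _ _
          rw [habs] at h2 hq2
          have hzz : (0:ℝ) ≤ z - zbar := by linarith
          have hmm : m / 2 * (z - zbar) ≤ (b - p) / 2 * (z - zbar) := by nlinarith
          rw [huz, huR]
          linarith
      unfold InSubjet
      have heq0 : (fun z => min (u z - (u zbar + p * (z - zbar) + X / 2 * (z - zbar) ^ 2)) 0)
          =ᶠ[nhds zbar] (fun _ => (0:ℝ)) := by
        filter_upwards [hev] with z hz
        exact min_eq_right hz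
      exact (isLittleO_zero _ _).congr' heq0.symm EventuallyEq.rfl
    -- now contradiction with large X
    set X := (δ * u zbar + θ * zbar * p - f zbar + 1) * (2 / θ) with hX
    have := hsuper p X (hsub X)
    rw [hX] at this
    have hθ' : θ ≠ 0 := ne_of_gt hθ
    have : 0 ≤ δ * u zbar - (δ * u zbar + θ * zbar * p - f zbar + 1) + θ * zbar * p - f zbar := by
      have hcalc : θ / 2 * ((δ * u zbar + θ * zbar * p - f zbar + 1) * (2 / θ))
          = δ * u zbar + θ * zbar * p - f zbar + 1 := by
        field_simp
      linarith [this, hcalc.symm.le, hcalc.le]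
    linarith
  refine ⟨key, fun hle => ?_⟩
  have hab : a = b := le_antisymm hle key
  have : HasDerivAt u a zbar := by
    rw [hasDerivAt_iff_isLittleO]
    rw [isLittleO_iff]
    intro c hc
    have hL2 := (isLittleO_iff.mp hLo) hc
    have hR2 := (isLittleO_iff.mp hRo) hc
    filter_upwards [hL2, hR2, hIoo] with z e1 e2 hz
    rcases le_or_gt z zbar with hle' | hlt
    · have huz : u z = uL z := heqL ⟨hz.1, hle'⟩
      simpa [huz, huL, smul_eq_mul, mul_comm] using e1
    · have huz : u z = uR z := heqR ⟨le_of_lt hlt, hz.2⟩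
      rw [huz, huR]
      simpa [hab, smul_eq_mul, mul_comm] using e2
  exact this.differentiableAt
end

section
/- One-dimensional piecewise-classical verification for the obstacle problem: let F(z, r, p, X) = δ r - (θ/2) X + θ z p - f(z) with δ, θ > 0 and f continuous, let g : ℝ → ℝ be continuous, and suppose ℝ = C ⊔ S where C is open. Let u : ℝ → ℝ satisfy: (i) u is C² on C and F(z, u, u', u'') = 0 with u > g on C; (ii) u = g on S, g is C² on a neighborhood of each point of the interior of S, and F(z, g, g', g'') ≥ 0 on the interior of S; (iii) u is continuous on ℝ, differentiable at each point z̄ of ∂C, and at such points u coincides on each side of z̄ with a C² function (u₀ from the C-side and g from the S-side). Then u is a viscosity solution on ℝ of min{F(z, V, V', V''), V - g} = 0. -/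
open Asymptotics Filter

/-- `(p, X)` belongs to the second-order superjet `J^{2,+} u (z̄)`. -/
def InSuperjet (u : ℝ → ℝ) (zbar p X : ℝ) : Prop :=
  (fun z => max (u z - (u zbar + p * (z - zbar) + X / 2 * (z - zbar) ^ 2)) 0)
    =o[nhds zbar] fun z => (z - zbar) ^ 2

section AuxLemmas

open Set

variable {u v : ℝ → ℝ} {a p X p₀ X₀ : ℝ}

/-- Second-order Taylor expansion as a little-o statement, for `v` that is `C²`
on an open set containing `a`. -/
lemma taylor2_isLittleO {U : Set ℝ} (hU : IsOpen U) (haU : a ∈ U)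
    (h : ContDiffOn ℝ 2 v U) :
    (fun z => v z - (v a + deriv v a * (z - a) + deriv (deriv v) a / 2 * (z - a) ^ 2))
      =o[nhds a] fun z => (z - a) ^ 2 := by
  have hvd : DifferentiableOn ℝ v U := h.differentiableOn (by norm_num)
  have hdv : ContDiffOn ℝ 1 (deriv v) U :=
    h.deriv_of_isOpen hU (by norm_num)
  have hdd : HasDerivAt (deriv v) (deriv (deriv v) a) a :=
    ((hdv.differentiableOn (by norm_num)).differentiableAt (hU.mem_nhds haU)).hasDerivAt
  set p := deriv v a with hp
  set X := deriv (deriv v) a with hX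
  rw [isLittleO_iff]
  intro ε hε
  -- the first derivative expansion
  have h1 : ∀ᶠ t in nhds a, ‖deriv v t - (p + X * (t - a))‖ ≤ ε * ‖t - a‖ := by
    have := hdd.isLittleO.def hε
    filter_upwards [this] with t ht
    simpa [sub_add_eq_sub_sub, mul_comm] using ht
  obtain ⟨r, hr, hball⟩ := Metric.eventually_nhds_iff_ball.1
    (h1.and (hU.eventually_mem haU))
  rw [Metric.eventually_nhds_iff_ball]
  refine ⟨r, hr, fun z hz => ?_⟩
  -- apply MVT to w on the segment from a to z
  set w := fun t => v t - (v a + p * (t - a) + X / 2 * (t - a) ^ 2) with hw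
  have hle : ∀ t ∈ segment ℝ a z, ‖t - a‖ ≤ ‖z - a‖ := by
    intro t ht
    obtain ⟨b, c, hb, hc, hbc, rfl⟩ := ht
    have hbc' : b • a + c • z - a = c * (z - a) := by
      have : b = 1 - c := by linarith
      subst this; ring_nf
    rw [hbc']
    simp only [norm_mul, Real.norm_eq_abs, abs_of_nonneg hc]
    nlinarith [abs_nonneg (z - a)]
  have hseg : segment ℝ a z ⊆ Metric.ball a r := by
    intro t ht
    have := hle t ht
    simp only [Metric.mem_ball, Real.dist_eq] at hz ⊢
    calc |t - a| ≤ |z - a| := this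
      _ < r := hz
  have hderiv : ∀ t ∈ segment ℝ a z,
      HasDerivWithinAt w (deriv v t - (p + X * (t - a))) (segment ℝ a z) t := by
    intro t ht
    have htU : t ∈ U := (hball _ (hseg ht)).2
    have h1 : HasDerivAt v (deriv v t) t :=
      ((hvd.differentiableAt (hU.mem_nhds htU))).hasDerivAt
    have h2 : HasDerivAt (fun t => v a + p * (t - a) + X / 2 * (t - a) ^ 2)
        (p + X * (t - a)) t := by
      have : HasDerivAt (fun t : ℝ => t - a) 1 t := (hasDerivAt_id t).sub_const a
      have hq : HasDerivAt (fun t : ℝ => X / 2 * (t - a) ^ 2) (X * (t - a)) t := by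
        have := (this.pow 2).const_mul (X / 2)
        exact this.congr_deriv (by ring)
      have hl : HasDerivAt (fun t : ℝ => v a + p * (t - a)) p t := by
        have := (this.const_mul p).const_add (v a)
        simpa using this
      exact hl.add hq
    exact (h1.sub h2).hasDerivWithinAt
  have hbound : ∀ t ∈ segment ℝ a z, ‖deriv v t - (p + X * (t - a))‖ ≤ ε * ‖z - a‖ := by
    intro t ht
    refine le_trans (hball _ (hseg ht)).1 ?_
    have := hle t ht
    simp only [Real.norm_eq_abs] at this ⊢
    nlinarith [abs_nonneg (t-a), hε.le]
  have := (convex_segment a z).norm_image_sub_le_of_norm_hasDerivWithin_le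
    hderiv hbound (left_mem_segment ℝ a z) (right_mem_segment ℝ a z)
  have hw0 : w a = 0 := by simp [hw]
  rw [hw0, sub_zero] at this
  calc ‖w z‖ ≤ ε * ‖z - a‖ * ‖z - a‖ := this
    _ = ε * ‖(z - a) ^ 2‖ := by
        rw [Real.norm_eq_abs, Real.norm_eq_abs, abs_pow]; ring

lemma inSubjet_lower (h : InSubjet u a p X) {ε : ℝ} (hε : 0 < ε) :
    ∀ᶠ z in nhds a,
      u z - (u a + p * (z - a) + X / 2 * (z - a) ^ 2) ≥ -(ε * (z - a) ^ 2) := by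
  filter_upwards [h.def hε] with z hz
  have h1 : ‖min (u z - (u a + p * (z - a) + X / 2 * (z - a) ^ 2)) 0‖
      ≤ ε * (z - a) ^ 2 := by
    calc ‖min (u z - (u a + p * (z - a) + X / 2 * (z - a) ^ 2)) 0‖
        ≤ ε * ‖(z - a) ^ 2‖ := hz
      _ = ε * (z - a) ^ 2 := by rw [Real.norm_eq_abs, abs_of_nonneg (sq_nonneg _)]
  have h2 := neg_abs_le (min (u z - (u a + p * (z - a) + X / 2 * (z - a) ^ 2)) 0)
  have h3 := min_le_left (u z - (u a + p * (z - a) + X / 2 * (z - a) ^ 2)) (0:ℝ)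
  rw [Real.norm_eq_abs] at h1
  cases le_or_gt (u z - (u a + p * (z - a) + X / 2 * (z - a) ^ 2)) 0 with
  | inl hle =>
      rw [min_eq_left hle] at h1
      have := abs_le.1 h1
      linarith [this.1]
  | inr hgt => nlinarith [sq_nonneg (z - a)]

/-- The superjet is the subjet of the negation. -/
lemma inSuperjet_iff_neg :
    InSuperjet u a p X ↔ InSubjet (fun z => -u z) a (-p) (-X) := by
  unfold InSuperjet InSubjet
  have hB : ∀ z : ℝ, (-u z - (-u a + -p * (z - a) + -X / 2 * (z - a) ^ 2))
      = -(u z - (u a + p * (z - a) + X / 2 * (z - a) ^ 2)) := fun z => by ring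
  constructor
  · intro h
    refine h.neg_left.congr' (Eventually.of_forall fun z => ?_)
      (Eventually.of_forall fun z => rfl)
    simp only [hB z]
    rw [neg_sup, neg_zero]
  · intro h
    have h' := h.neg_left
    refine h'.congr' (Eventually.of_forall fun z => ?_) (Eventually.of_forall fun z => rfl)
    simp only [hB z]
    rw [neg_inf, neg_zero, neg_neg]

/-- If `u` is differentiable at `a` and `(p, X)` is in the subjet then `p = deriv`. -/
lemma inSubjet_p_eq (hd : HasDerivAt u p₀ a)
    (h : InSubjet u a p X) : p = p₀ := by
  have key : ∀ ε > (0:ℝ), p₀ - p ≥ -ε ∧ p₀ - p ≤ ε := by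
    intro ε hε
    have h1 := inSubjet_lower h (by norm_num : (0:ℝ) < 1)
    have h2 : ∀ᶠ z in nhds a, ‖u z - u a - (z - a) * p₀‖ ≤ ε * ‖z - a‖ := by
      have := hd.isLittleO.def hε
      filter_upwards [this] with z hz
      simpa [smul_eq_mul] using hz
    have key : ∀ᶠ z in nhds a,
        (p₀ - p) * (z - a) ≥ -(1 + |X| / 2) * (z - a) ^ 2 - ε * |z - a| := by
      filter_upwards [h1, h2] with z hz1 hz2
      rw [Real.norm_eq_abs, Real.norm_eq_abs] at hz2
      have := abs_le.1 hz2
      have habs := le_abs_self X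
      have habs' := neg_abs_le X
      nlinarith [sq_nonneg (z - a), this.1, this.2, abs_nonneg (z-a), sq_abs (z-a)]
    constructor
    · -- from the right
      have hev : ∀ᶠ z in nhdsWithin a (Ioi a),
          p₀ - p ≥ -(1 + |X| / 2) * (z - a) - ε := by
        filter_upwards [key.filter_mono nhdsWithin_le_nhds,
          eventually_mem_nhdsWithin] with z hz hz'
        have hza : 0 < z - a := sub_pos.2 hz'
        rw [abs_of_pos hza] at hz
        nlinarith
      have hlim : Tendsto (fun z => -(1 + |X| / 2) * (z - a) - ε)
          (nhdsWithin a (Ioi a)) (nhds (-ε)) := by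
        have : Tendsto (fun z => -(1 + |X| / 2) * (z - a) - ε) (nhds a) (nhds (-ε)) := by
          have : Continuous (fun z : ℝ => -(1 + |X| / 2) * (z - a) - ε) := by continuity
          have h0 := this.tendsto a
          simpa using h0
        exact this.mono_left nhdsWithin_le_nhds
      exact le_of_tendsto hlim (hev.mono fun z h => h)
    · -- from the left
      have hev : ∀ᶠ z in nhdsWithin a (Iio a),
          p₀ - p ≤ (1 + |X| / 2) * (a - z) + ε := by
        filter_upwards [key.filter_mono nhdsWithin_le_nhds,
          eventually_mem_nhdsWithin] with z hz hz'
        have hza : z - a < 0 := sub_neg.2 hz'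
        rw [abs_of_neg hza] at hz
        nlinarith
      have hlim : Tendsto (fun z => (1 + |X| / 2) * (a - z) + ε)
          (nhdsWithin a (Iio a)) (nhds ε) := by
        have : Tendsto (fun z => (1 + |X| / 2) * (a - z) + ε) (nhds a) (nhds ε) := by
          have : Continuous (fun z : ℝ => (1 + |X| / 2) * (a - z) + ε) := by continuity
          have h0 := this.tendsto a
          simpa using h0
        exact this.mono_left nhdsWithin_le_nhds
      exact ge_of_tendsto hlim (hev.mono fun z h => h)
  have h1 : p₀ - p ≥ 0 := by
    by_contra hc
    push_neg at hc
    have := (key ((p - p₀)/2) (by linarith)).1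
    linarith
  have h2 : p₀ - p ≤ 0 := by
    by_contra hc
    push_neg at hc
    have := (key ((p₀ - p)/2) (by linarith)).2
    linarith
  linarith

/-- One-sided second-order bound from the subjet condition. -/
lemma inSubjet_X_le {l : Filter ℝ} [l.NeBot]
    (hl : l ≤ nhdsWithin a {a}ᶜ)
    (hT : (fun z => v z - (v a + p * (z - a) + X₀ / 2 * (z - a) ^ 2))
      =o[nhds a] fun z => (z - a) ^ 2)
    (huv : ∀ᶠ z in l, u z = v z) (hua : u a = v a)
    (h : InSubjet u a p X) : X ≤ X₀ := by
  have hln : l ≤ nhds a := hl.trans nhdsWithin_le_nhds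
  have key : ∀ ε > (0:ℝ), (X₀ - X) / 2 ≥ -(2 * ε) := by
    intro ε hε
    have h1 := (inSubjet_lower h hε).filter_mono hln
    have h2 : ∀ᶠ z in l, ‖v z - (v a + p * (z - a) + X₀ / 2 * (z - a) ^ 2)‖
        ≤ ε * (z - a) ^ 2 := by
      have := (hT.def hε).filter_mono hln
      filter_upwards [this] with z hz
      calc ‖v z - (v a + p * (z - a) + X₀ / 2 * (z - a) ^ 2)‖ ≤ ε * ‖(z - a)^2‖ := hz
        _ = ε * (z - a) ^ 2 := by rw [Real.norm_eq_abs, abs_of_nonneg (sq_nonneg _)]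
    have h3 : ∀ᶠ z in l, z ≠ a := hl eventually_mem_nhdsWithin
    have h4 : ∀ᶠ z in l, (X₀ - X) / 2 ≥ -(2 * ε) := by
      filter_upwards [h1, h2, huv, h3] with z hz1 hz2 hz3 hz4
      rw [hz3, hua] at hz1
      rw [Real.norm_eq_abs] at hz2
      have habs := abs_le.1 hz2
      have hne : z - a ≠ 0 := sub_ne_zero.2 hz4
      have hsq : 0 < (z - a) ^ 2 := by positivity
      have : (X₀ - X) / 2 * (z - a) ^ 2 ≥ -(2 * ε) * (z - a) ^ 2 := by nlinarith [habs.1]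
      exact le_of_mul_le_mul_right (by nlinarith) hsq
    exact h4.exists.choose_spec
  by_contra hc
  push_neg at hc
  have := key ((X - X₀)/8) (by linarith)
  linarith

/-- `(z-a)^2` is little-o of `z - a` at `a`. -/
lemma sq_isLittleO (a : ℝ) :
    (fun z : ℝ => (z - a) ^ 2) =o[nhds a] fun z => z - a := by
  rw [isLittleO_iff]
  intro ε hε
  have : ∀ᶠ z in nhds a, |z - a| ≤ ε := by
    have h1 : Tendsto (fun z : ℝ => |z - a|) (nhds a) (nhds 0) := by
      have h0 : Tendsto (fun z : ℝ => z - a) (nhds a) (nhds (a - a)) :=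
        (continuous_id.sub continuous_const).tendsto a
      rw [sub_self] at h0
      simpa using h0.abs
    exact h1.eventually_le_const hε
  filter_upwards [this] with z hz
  rw [Real.norm_eq_abs, Real.norm_eq_abs, abs_pow]
  nlinarith [abs_nonneg (z - a)]

/-- A second-order Taylor estimate gives first order differentiability. -/
lemma hasDerivAt_of_taylor
    (hT : (fun z => v z - (v a + p₀ * (z - a) + X₀ / 2 * (z - a) ^ 2))
      =o[nhds a] fun z => (z - a) ^ 2) :
    HasDerivAt v p₀ a := by
  rw [hasDerivAt_iff_isLittleO]
  have h1 : (fun z => v z - (v a + p₀ * (z - a) + X₀ / 2 * (z - a) ^ 2))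
      =o[nhds a] fun z => z - a := hT.trans (sq_isLittleO a)
  have h2 : (fun z : ℝ => X₀ / 2 * (z - a) ^ 2) =o[nhds a] fun z => z - a :=
    ((sq_isLittleO a).const_mul_left (X₀ / 2))
  have := h1.add h2
  refine this.congr' (Eventually.of_forall fun z => by ring_nf)
    (Eventually.of_forall fun z => rfl)

/-- Two-sided classical comparison for the subjet. -/
lemma inSubjet_classical
    (hT : (fun z => v z - (v a + p₀ * (z - a) + X₀ / 2 * (z - a) ^ 2))
      =o[nhds a] fun z => (z - a) ^ 2)
    (huv : u =ᶠ[nhds a] v) (h : InSubjet u a p X) : p = p₀ ∧ X ≤ X₀ := by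
  have hua : u a = v a := huv.eq_of_nhds
  have hdv : HasDerivAt v p₀ a := hasDerivAt_of_taylor hT
  have hdu : HasDerivAt u p₀ a := hdv.congr_of_eventuallyEq huv
  have hp : p = p₀ := inSubjet_p_eq hdu h
  subst hp
  refine ⟨rfl, ?_⟩
  exact inSubjet_X_le (le_refl (nhdsWithin a {a}ᶜ)) hT
    (huv.filter_mono nhdsWithin_le_nhds) hua h

/-- Two-sided classical comparison for the superjet. -/
lemma inSuperjet_classical
    (hT : (fun z => v z - (v a + p₀ * (z - a) + X₀ / 2 * (z - a) ^ 2))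
      =o[nhds a] fun z => (z - a) ^ 2)
    (huv : u =ᶠ[nhds a] v) (h : InSuperjet u a p X) : p = p₀ ∧ X₀ ≤ X := by
  rw [inSuperjet_iff_neg] at h
  have hT' : (fun z => (fun z => -v z) z - ((fun z => -v z) a + (-p₀) * (z - a)
      + (-X₀) / 2 * (z - a) ^ 2)) =o[nhds a] fun z => (z - a) ^ 2 := by
    refine hT.neg_left.congr' (Eventually.of_forall fun z => by ring_nf)
      (Eventually.of_forall fun z => rfl)
  have huv' : (fun z => -u z) =ᶠ[nhds a] (fun z => -v z) :=
    huv.mono fun z hz => by simp [hz]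
  obtain ⟨hp, hX⟩ := inSubjet_classical hT' huv' h
  constructor
  · exact neg_injective hp
  · linarith

end AuxLemmas

/-- one-dimensional piecewise-classical verification for the obstacle
problem. -/
theorem piecewise_classical_viscosity_solution
    (θ δ : ℝ) (hθ : 0 < θ) (hδ : 0 < δ)
    (f g : ℝ → ℝ) (hf : Continuous f) (hg : Continuous g)
    (C : Set ℝ) (hC : IsOpen C) (S : Set ℝ) (hS : S = Cᶜ)
    (u u₀ : ℝ → ℝ)
    (hu₀C2 : ContDiffOn ℝ 2 u₀ (closure C))
    (huEqC : Set.EqOn u u₀ (closure C))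
    (hPDE : ∀ z ∈ C,
      δ * u₀ z - θ / 2 * deriv (deriv u₀) z + θ * z * deriv u₀ z - f z = 0)
    (hObs : ∀ z ∈ C, g z < u z)
    (huEqS : Set.EqOn u g S)
    (hgC2int : ∀ z ∈ interior S, ∃ ε > 0, ContDiffOn ℝ 2 g (Set.Ioo (z - ε) (z + ε)))
    (hgSuper : ∀ z ∈ interior S,
      0 ≤ δ * g z - θ / 2 * deriv (deriv g) z + θ * z * deriv g z - f z)
    (hucont : Continuous u)
    (hudiff : ∀ z ∈ frontier C, DifferentiableAt ℝ u z)
    (hgC2bdry : ∀ z ∈ frontier C, ∃ ε > 0, ContDiffOn ℝ 2 g (Set.Ioo (z - ε) (z + ε))) :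
    ∀ zbar : ℝ,
      (∀ p X : ℝ, InSubjet u zbar p X →
        0 ≤ min (δ * u zbar - θ / 2 * X + θ * zbar * p - f zbar) (u zbar - g zbar)) ∧
      (∀ p X : ℝ, InSuperjet u zbar p X →
        min (δ * u zbar - θ / 2 * X + θ * zbar * p - f zbar) (u zbar - g zbar) ≤ 0) := by
  intro a
  -- global comparison u ≥ g
  have hug : ∀ z, g z ≤ u z := by
    intro z
    by_cases hz : z ∈ C
    · exact (hObs z hz).le
    · rw [huEqS (by rw [hS]; exact hz)]
  by_cases haC : a ∈ C
  · -- interior of the continuation region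
    have haCl : a ∈ closure C := subset_closure haC
    have hC2 : ContDiffOn ℝ 2 u₀ C := hu₀C2.mono subset_closure
    have hT := taylor2_isLittleO hC haC hC2
    have huv : u =ᶠ[nhds a] u₀ :=
      eventually_of_mem (hC.mem_nhds haC) fun z hz => huEqC (subset_closure hz)
    have hua : u a = u₀ a := huEqC haCl
    have hpde := hPDE a haC
    constructor
    · intro p X h
      obtain ⟨hp, hX⟩ := inSubjet_classical hT huv h
      subst hp
      refine le_min ?_ (by linarith [hObs a haC])
      rw [hua]
      nlinarith
    · intro p X h
      obtain ⟨hp, hX⟩ := inSuperjet_classical hT huv h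
      subst hp
      refine min_le_of_left_le ?_
      rw [hua]
      nlinarith
  by_cases haS : a ∈ interior S
  · -- interior of the stopping region
    obtain ⟨ε, hε, hgC2⟩ := hgC2int a haS
    have haI : a ∈ Set.Ioo (a - ε) (a + ε) := by constructor <;> linarith
    have hT := taylor2_isLittleO isOpen_Ioo haI hgC2
    have huv : u =ᶠ[nhds a] g :=
      eventually_of_mem (isOpen_interior.mem_nhds haS)
        fun z hz => huEqS (interior_subset hz)
    have hua : u a = g a := huEqS (interior_subset haS)
    have hsup := hgSuper a haS
    constructor
    · intro p X h
      obtain ⟨hp, hX⟩ := inSubjet_classical hT huv h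
      subst hp
      refine le_min ?_ (by linarith [hug a])
      rw [hua]
      nlinarith
    · intro p X h
      refine min_le_of_right_le ?_
      rw [hua]; linarith
  · -- frontier case
    have haS' : a ∈ S := by rw [hS]; exact haC
    have haCl : a ∈ closure C := by
      by_contra hc
      exact haS (by rw [hS, interior_compl]; exact hc)
    have hfr : a ∈ frontier C := by
      rw [frontier_eq_closure_inter_closure, hC.isClosed_compl.closure_eq]
      exact ⟨haCl, haC⟩
    have hua : u a = g a := huEqS haS'
    constructor
    · -- subjet
      intro p X h
      obtain ⟨ε, hε, hgC2⟩ := hgC2bdry a hfr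
      have haI : a ∈ Set.Ioo (a - ε) (a + ε) := by constructor <;> linarith
      refine le_min ?_ (by linarith [hug a])
      by_cases hcl2 : a ∈ closure (interior S)
      · -- C is "thin" on one side : use the g-side
        haveI hne : (nhdsWithin a (interior S)).NeBot :=
          mem_closure_iff_nhdsWithin_neBot.1 hcl2
        have hl : nhdsWithin a (interior S) ≤ nhdsWithin a {a}ᶜ :=
          nhdsWithin_mono a (fun z hz => by
            intro hza
            simp only [Set.mem_singleton_iff] at hza
            exact haS (hza ▸ hz))
        have hgd : HasDerivAt g (deriv g a) a :=
          (((hgC2.differentiableOn (by norm_num)).differentiableAt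
            (isOpen_Ioo.mem_nhds haI))).hasDerivAt
        have hud : HasDerivAt u (deriv u a) a := (hudiff a hfr).hasDerivAt
        have hp : p = deriv u a := inSubjet_p_eq hud h
        -- derivatives agree since u - g has a minimum at a
        have hmin : IsLocalMin (fun z => u z - g z) a := by
          apply Filter.Eventually.of_forall
          intro z
          show u a - g a ≤ u z - g z
          rw [hua]
          linarith [hug z]
        have hder0 : deriv u a - deriv g a = 0 :=
          hmin.hasDerivAt_eq_zero (hud.sub hgd)
        have hpg : p = deriv g a := by rw [hp]; linarith
        have hT : (fun z => g z - (g a + p * (z - a)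
            + deriv (deriv g) a / 2 * (z - a) ^ 2)) =o[nhds a] fun z => (z - a) ^ 2 := by
          rw [hpg]
          exact taylor2_isLittleO isOpen_Ioo haI hgC2
        have huvl : ∀ᶠ z in nhdsWithin a (interior S), u z = g z :=
          eventually_mem_nhdsWithin.mono fun z hz => huEqS (interior_subset hz)
        have hX : X ≤ deriv (deriv g) a := inSubjet_X_le hl hT huvl hua h
        -- the obstacle supersolution inequality extends to a by continuity
        have hGcont : ContinuousAt
            (fun z => δ * g z - θ / 2 * deriv (deriv g) z + θ * z * deriv g z - f z) a := by
          have hg1 : ContinuousAt (deriv g) a :=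
            (hgC2.continuousOn_deriv_of_isOpen isOpen_Ioo (by norm_num)).continuousAt
              (isOpen_Ioo.mem_nhds haI)
          have hg2 : ContinuousAt (deriv (deriv g)) a := by
            have hdg : ContDiffOn ℝ 1 (deriv g) (Set.Ioo (a - ε) (a + ε)) :=
              hgC2.deriv_of_isOpen isOpen_Ioo (by norm_num)
            exact (hdg.continuousOn_deriv_of_isOpen isOpen_Ioo (by norm_num)).continuousAt
              (isOpen_Ioo.mem_nhds haI)
          fun_prop
        have hG0 : 0 ≤ δ * g a - θ / 2 * deriv (deriv g) a + θ * a * deriv g a - f a := by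
          refine ge_of_tendsto (hGcont.tendsto.mono_left
            (nhdsWithin_le_nhds : nhdsWithin a (interior S) ≤ nhds a)) ?_
          exact eventually_mem_nhdsWithin.mono fun z hz => hgSuper z hz
        rw [hua, hpg]
        nlinarith
      · -- C is locally dense : use the u₀-side
        obtain ⟨η, hη, hsub⟩ := Metric.mem_nhds_iff.1
          ((isOpen_compl_iff.mpr isClosed_closure).mem_nhds hcl2)
        have hVsub : Metric.ball a η ⊆ closure C := by
          intro z hz
          have hz2 : z ∉ interior S := fun hzi => hsub hz (subset_closure hzi)
          rw [hS, interior_compl] at hz2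
          simpa using hz2
        have hu₀V : ContDiffOn ℝ 2 u₀ (Metric.ball a η) := hu₀C2.mono hVsub
        have haV : a ∈ Metric.ball a η := Metric.mem_ball_self hη
        have hT := taylor2_isLittleO Metric.isOpen_ball haV hu₀V
        have huv : u =ᶠ[nhds a] u₀ :=
          eventually_of_mem (Metric.ball_mem_nhds a hη) fun z hz => huEqC (hVsub hz)
        obtain ⟨hp, hX⟩ := inSubjet_classical hT huv h
        subst hp
        -- the PDE extends to a by continuity and density of C
        haveI hne : (nhdsWithin a C).NeBot := mem_closure_iff_nhdsWithin_neBot.1 haCl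
        have hHcont : ContinuousAt
            (fun z => δ * u₀ z - θ / 2 * deriv (deriv u₀) z + θ * z * deriv u₀ z - f z) a := by
          have hu1 : ContinuousAt u₀ a :=
            (hu₀V.continuousOn.continuousAt (Metric.ball_mem_nhds a hη))
          have hu2 : ContinuousAt (deriv u₀) a :=
            (hu₀V.continuousOn_deriv_of_isOpen Metric.isOpen_ball (by norm_num)).continuousAt
              (Metric.ball_mem_nhds a hη)
          have hu3 : ContinuousAt (deriv (deriv u₀)) a := by
            have hdu : ContDiffOn ℝ 1 (deriv u₀) (Metric.ball a η) :=
              hu₀V.deriv_of_isOpen Metric.isOpen_ball (by norm_num)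
            exact (hdu.continuousOn_deriv_of_isOpen Metric.isOpen_ball
              (by norm_num)).continuousAt (Metric.ball_mem_nhds a hη)
          fun_prop
        have hH0 : δ * u₀ a - θ / 2 * deriv (deriv u₀) a + θ * a * deriv u₀ a - f a = 0 := by
          have t1 : Filter.Tendsto
              (fun z => δ * u₀ z - θ / 2 * deriv (deriv u₀) z + θ * z * deriv u₀ z - f z)
              (nhdsWithin a C) (nhds (δ * u₀ a - θ / 2 * deriv (deriv u₀) a
                + θ * a * deriv u₀ a - f a)) :=
            hHcont.tendsto.mono_left nhdsWithin_le_nhds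
          have t2 : Filter.Tendsto
              (fun z => δ * u₀ z - θ / 2 * deriv (deriv u₀) z + θ * z * deriv u₀ z - f z)
              (nhdsWithin a C) (nhds 0) := by
            refine Filter.Tendsto.congr' ?_ tendsto_const_nhds
            exact eventually_mem_nhdsWithin.mono fun z hz => (hPDE z hz).symm
          exact tendsto_nhds_unique t1 t2
        have hua0 : u a = u₀ a := huEqC haCl
        rw [hua0]
        nlinarith
    · -- superjet : trivial since u a = g a
      intro p X _
      refine min_le_of_right_le ?_
      rw [hua]; linarith
end
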